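/- arXiv:1207.1607 — 6 statements merged into one kernel-verified Lean document; each statement's English description precedes it below -/
import Mathlib

section
/- For q ∈ ℕ, p ∈ ℤ with gcd(p,q) = r > 1, and any 1-periodic function φ : ℝ → ℂ, the incomplete Gauss sum g_φ(p,q) = ∑_{h=0}^{q-1} φ(h/q) e^{2πi p h²/q} satisfies g_φ(p,q) = g_{φ_r}(p/r, q/r), where φ_r(x) = ∑_{k=0}^{r-1} φ((x+k)/r). -/
open Finset Complex Real

/-
Write `q = m r` and `p = p' r`. Each `h < q` is uniquely `j + m k` with `j < m`, `k < r`, and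
`p h² / q = p' (j + m k)² / m ≡ p' j² / m (mod 1)`, so the phase depends only on `j`, while
`h / q = (j / m + k) / r`. Grouping the terms of `g_φ(p, q)` by `j` therefore collects the weights
`φ((j / m + k) / r)`, `k < r`, into `φ_r(j / m)`.
-/

theorem Finset.sum_range_mul_eq_sum_sum {M : Type*} [AddCommMonoid M] (f : ℕ → M) (m : ℕ) :
    ∀ n, ∑ h ∈ range (m * n), f h = ∑ j ∈ range m, ∑ k ∈ range n, f (j + m * k)
  | 0 => by simp
  | n + 1 => by
    rw [Nat.mul_succ, sum_range_add, sum_range_mul_eq_sum_sum f m n, ← sum_add_distrib]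
    simp only [sum_range_succ, add_comm]

theorem Complex.exp_quadratic_phase_add_mul (a : ℤ) {m : ℕ} (hm : m ≠ 0) (j k : ℕ) :
    exp (2 * π * I * a * ((j + m * k : ℕ) : ℂ) ^ 2 / m) =
      exp (2 * π * I * a * (j : ℂ) ^ 2 / m) := by
  rw [exp_eq_exp_iff_exists_int]
  refine ⟨a * (2 * j * k + m * k ^ 2), ?_⟩
  push_cast
  field_simp
  ring

theorem stmt_0_general (q : ℕ) (p : ℤ) (φ : ℝ → ℂ)
    (r : ℕ) (hr : (r : ℤ) = Int.gcd p (q : ℤ)) :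
    ∑ h ∈ Finset.range q, φ ((h : ℝ) / q) *
        Complex.exp (2 * Real.pi * Complex.I * (p : ℂ) * (h : ℂ) ^ 2 / q)
      = ∑ h ∈ Finset.range (q / r),
          (∑ k ∈ Finset.range r, φ (((h : ℝ) / ((q / r : ℕ) : ℝ) + k) / r)) *
            Complex.exp (2 * Real.pi * Complex.I * ((p / (r : ℤ) : ℤ) : ℂ) * (h : ℂ) ^ 2
              / ((q / r : ℕ) : ℂ)) := by
  have hrq : r ∣ q := Int.natCast_dvd_natCast.mp (hr ▸ Int.gcd_dvd_right p q)
  have hrp : (r : ℤ) ∣ p := hr ▸ Int.gcd_dvd_left p q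
  obtain ⟨m, rfl⟩ := hrq
  obtain ⟨p', rfl⟩ := hrp
  rcases eq_or_ne r 0 with rfl | hr0
  · simp
  rw [Nat.mul_div_cancel_left _ (Nat.pos_of_ne_zero hr0), Int.mul_ediv_cancel_left _ (mod_cast hr0),
    Nat.mul_comm, sum_range_mul_eq_sum_sum]
  simp only [sum_mul]
  refine sum_congr rfl fun j hj => sum_congr rfl fun k _ => ?_
  have hm : m ≠ 0 := by rw [mem_range] at hj; omega
  congr 1
  · congr 1
    push_cast
    field_simp
  · rw [← exp_quadratic_phase_add_mul p' hm j k]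
    congr 1
    push_cast
    field_simp

/-- Reduction of incomplete Gauss sums to the coprime case:
if `gcd(p,q) = r > 1` then `g_φ(p,q) = g_{φ_r}(p/r, q/r)`. -/
theorem stmt_0 (q : ℕ) (hq : 0 < q) (p : ℤ) (φ : ℝ → ℂ)
    (hper : ∀ x : ℝ, φ (x + 1) = φ x)
    (r : ℕ) (hr : (r : ℤ) = Int.gcd p (q : ℤ)) (hr1 : 1 < r) :
    ∑ h ∈ Finset.range q, φ ((h : ℝ) / q) *
        Complex.exp (2 * Real.pi * Complex.I * (p : ℂ) * (h : ℂ) ^ 2 / q)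
      = ∑ h ∈ Finset.range (q / r),
          (∑ k ∈ Finset.range r, φ (((h : ℝ) / ((q / r : ℕ) : ℝ) + k) / r)) *
            Complex.exp (2 * Real.pi * Complex.I * ((p / (r : ℤ) : ℤ) : ℂ) * (h : ℂ) ^ 2
              / ((q / r : ℕ) : ℂ)) :=
  stmt_0_general q p φ r hr
end

section
/- Let q ≡ 2 mod 4, gcd(p,q) = 1, and k an odd integer. Then ∑_{h mod q} e^{2πi(p h² + k h)/q} = 2 g_1(2p, q/2) · e^{-2πi \overline{8p} k² / (q/2)}, where \overline{8p} is the inverse of 8p modulo q/2. -/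
/-!
Write `q = 2m` with `m` odd; then `p` is odd as well. Because `p`, `k` and `m` are odd, the
summand `h ↦ e((p h² + k h)/q)` has period `m`, so the sum over `h mod q` is twice the sum over
`h mod m`.
As `2` is invertible mod `m`, we may substitute `h = 2x - 4wk` there; this makes `p h² + k h` twice
`2p (x - 2wk)² + k (x - 2wk)`, which is `2p x² - w k²` modulo `m` since `8pw ≡ 1 (mod m)`.
-/

open Finset Complex Real Function

noncomputable def expFrac (n : ℕ) (a : ℤ) : ℂ := exp (2 * π * I * a / n)

lemma expFrac_congr {n : ℕ} {a b : ℤ} (h : a ≡ b [ZMOD n]) : expFrac n a = expFrac n b := by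
  rcases eq_or_ne n 0 with rfl | hn
  · rw [Nat.cast_zero, Int.modEq_zero_iff] at h
    rw [h]
  · have : NeZero n := ⟨hn⟩
    simp only [expFrac, ← ZMod.stdAddChar_coe, (ZMod.intCast_eq_intCast_iff _ _ _).2 h]

lemma expFrac_add (n : ℕ) (a b : ℤ) : expFrac n (a + b) = expFrac n a * expFrac n b := by
  rw [expFrac, expFrac, expFrac, ← Complex.exp_add]
  push_cast
  ring_nf

lemma expFrac_mul_mul {c : ℕ} (hc : c ≠ 0) (n : ℕ) (a : ℤ) :
    expFrac (c * n) (c * a) = expFrac n a := by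
  have hc' : (c : ℂ) ≠ 0 := Nat.cast_ne_zero.2 hc
  simp only [expFrac]
  push_cast
  rw [mul_left_comm, mul_div_mul_left _ _ hc']

lemma sum_range_eq_sum_zmod_val {M : Type*} [AddCommMonoid M] (m : ℕ) [NeZero m] (g : ℕ → M) :
    ∑ h ∈ range m, g h = ∑ x : ZMod m, g x.val :=
  sum_nbij' (fun h => (h : ZMod m)) (fun x => x.val) (by simp)
    (fun x _ => mem_range.2 (ZMod.val_lt x)) (fun h hh => ZMod.val_cast_of_lt (mem_range.1 hh))
    (fun x _ => ZMod.natCast_zmod_val x) (fun h hh => by rw [ZMod.val_cast_of_lt (mem_range.1 hh)])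

namespace Function.Periodic

variable {M : Type*} {m : ℕ} {f : ℤ → M}

lemma sum_range_mul [AddCommMonoid M] (hf : Periodic f m) (n : ℕ) :
    ∑ h ∈ range (n * m), f h = n • ∑ h ∈ range m, f h := by
  induction n with
  | zero => simp
  | succ n ih =>
    rw [add_mul, one_mul, sum_range_add, ih, succ_nsmul]
    congr 1
    refine sum_congr rfl fun h _ => ?_
    rw [Nat.cast_add, add_comm, Nat.cast_mul]
    exact hf.nat_mul n h

lemma map_val_intCast [NeZero m] (hf : Periodic f m) (z : ℤ) :
    f (z : ZMod m).val = f z := by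
  rw [ZMod.val_intCast, Int.emod_def, mul_comm, ← smul_eq_mul, hf.sub_zsmul_eq]

lemma sum_range_comp_affine [AddCommMonoid M] (hf : Periodic f m) {a : ℤ} (ha : IsCoprime a m)
    (b : ℤ) :
    ∑ h ∈ range m, f (a * h + b) = ∑ h ∈ range m, f h := by
  rcases eq_or_ne m 0 with rfl | hm
  · simp
  have : NeZero m := ⟨hm⟩
  have hu : IsUnit (a : ZMod m) := (ZMod.coe_int_isUnit_iff_isCoprime a m).2 ha.symm
  have hbij : Bijective fun x : ZMod m => (a : ZMod m) * x + b :=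
    (Equiv.addRight (b : ZMod m)).bijective.comp hu.unit.mulLeft_bijective
  rw [sum_range_eq_sum_zmod_val m (fun h => f (a * h + b)), sum_range_eq_sum_zmod_val m (f ·)]
  refine Fintype.sum_bijective _ hbij _ _ fun x => ?_
  rw [← hf.map_val_intCast (a * x.val + b)]
  push_cast
  rw [ZMod.natCast_zmod_val]

end Function.Periodic

lemma expFrac_quadratic_periodic {m : ℕ} (hm : Odd m) {p k : ℤ} (hp : Odd p) (hk : Odd k) :
    Periodic (fun h : ℤ => expFrac (2 * m) (p * h ^ 2 + k * h)) m := by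
  intro h
  obtain ⟨c, hc⟩ := (hp.mul (Int.odd_coe_nat m |>.2 hm)).add_odd hk
  refine expFrac_congr (Int.modEq_iff_dvd.2 ⟨p * h + c, ?_⟩).symm
  push_cast
  linear_combination (m : ℤ) * hc

lemma expFrac_complete_square {m : ℕ} {p k w : ℤ} (hw : 8 * p * w ≡ 1 [ZMOD m]) (h : ℤ) :
    expFrac (2 * m) (p * (2 * h - 4 * w * k) ^ 2 + k * (2 * h - 4 * w * k))
      = expFrac m (2 * p * h ^ 2) * expFrac m (-(w * k ^ 2)) := by
  have hsq : p * (2 * h - 4 * w * k) ^ 2 + k * (2 * h - 4 * w * k)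
      = ((2 : ℕ) : ℤ) * (2 * p * (h - 2 * w * k) ^ 2 + k * (h - 2 * w * k)) := by
    push_cast
    ring
  rw [hsq, expFrac_mul_mul two_ne_zero, ← expFrac_add]
  obtain ⟨c, hc⟩ := hw.dvd
  refine expFrac_congr (Int.modEq_iff_dvd.2 ⟨c * (w * k ^ 2 - k * h), ?_⟩)
  linear_combination (w * k ^ 2 - k * h) * hc

lemma sum_expFrac_quadratic {m : ℕ} (hm : Odd m) {p k w : ℤ} (hp : Odd p) (hk : Odd k)
    (hw : 8 * p * w ≡ 1 [ZMOD m]) :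
    ∑ h ∈ range (2 * m), expFrac (2 * m) (p * h ^ 2 + k * h)
      = 2 * (∑ h ∈ range m, expFrac m (2 * p * h ^ 2)) * expFrac m (-(w * k ^ 2)) := by
  have hF := expFrac_quadratic_periodic hm hp hk
  have h2 : IsCoprime (2 : ℤ) m := Int.isCoprime_two_left.2 (Int.odd_coe_nat m |>.2 hm)
  calc ∑ h ∈ range (2 * m), expFrac (2 * m) (p * h ^ 2 + k * h)
      = 2 * ∑ h ∈ range m, expFrac (2 * m) (p * h ^ 2 + k * h) := by
        rw [hF.sum_range_mul 2, nsmul_eq_mul, Nat.cast_ofNat]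
    _ = 2 * ∑ h ∈ range m,
          expFrac (2 * m) (p * (2 * h - 4 * w * k) ^ 2 + k * (2 * h - 4 * w * k)) := by
        rw [← hF.sum_range_comp_affine h2 (-(4 * w * k))]
        simp only [← sub_eq_add_neg]
    _ = _ := by
        simp only [expFrac_complete_square hw]
        rw [← sum_mul, mul_assoc]

/-- If `q ≡ 2 mod 4`, `gcd(p,q) = 1` and `k` is odd, then
`∑_{h mod q} e((p h² + k h)/q) = 2 g₁(2p, q/2) · e(-(8p)⁻¹ k²/(q/2))`. -/
theorem stmt_5 (q : ℕ) (hq : q % 4 = 2) (p k : ℤ)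
    (hp : Int.gcd p (q : ℤ) = 1) (hk : Odd k)
    (w : ℤ) (hw : 8 * p * w ≡ 1 [ZMOD ((q / 2 : ℕ) : ℤ)]) :
    ∑ h ∈ Finset.range q,
        Complex.exp (2 * Real.pi * Complex.I * ((p : ℂ) * (h : ℂ) ^ 2 + (k : ℂ) * h) / q)
      = 2 * (∑ h ∈ Finset.range (q / 2),
            Complex.exp (2 * Real.pi * Complex.I * (2 * (p : ℂ)) * (h : ℂ) ^ 2 / ((q / 2 : ℕ) : ℂ))) *
          Complex.exp (-(2 * Real.pi * Complex.I) * (w : ℂ) * (k : ℂ) ^ 2 / ((q / 2 : ℕ) : ℂ)) := by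
  set m := q / 2
  have hqm : q = 2 * m := by omega
  have hm : Odd m := Nat.odd_iff.2 (by omega)
  have hp_odd : Odd p := by
    refine Int.not_even_iff_odd.1 fun he => ?_
    have h2 := Int.dvd_gcd he.two_dvd (show (2 : ℤ) ∣ q from ⟨m, by exact_mod_cast hqm⟩)
    rw [hp] at h2
    norm_num at h2
  have key := sum_expFrac_quadratic hm hp_odd hk hw
  rw [← hqm] at key
  simp only [expFrac] at key
  push_cast at key
  convert key using 3
  · exact sum_congr rfl fun h _ => by ring_nf
  · ring_nf
end

section
/- If q ∈ ℕ is not a perfect square, then there exists an integer r with r ≡ 1 mod 4 and Jacobi symbol (q/r) = -1. -/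
/-!
Choose a prime `p` occurring in `q` to an odd power `e`, and write `q = p ^ e * c` with `p ∤ c`.
Since `J(a | r)` depends only on `r` mod `4 * a`, it suffices to find `r` with `r ≡ 1 [MOD 4 * c]`
and `J(p | r) = -1`, for then `J(q | r) = (-1) ^ e * J(c | 1) = -1`. The second condition is met by
`r ≡ 5 [MOD 8]` if `p = 2`, and otherwise by `r ≡ 1 [MOD 4]` with `r` a non-residue mod `p`
(quadratic reciprocity); both congruences are compatible with the first because `gcd(p, c) = 1`.
-/

open jacobiSym
open scoped NumberTheorySymbols

theorem Nat.isSquare_of_forall_even_factorization {n : ℕ} (hn : n ≠ 0)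
    (h : ∀ p, Even (n.factorization p)) : IsSquare n := by
  refine ⟨n.factorization.prod fun p e => p ^ (e / 2), ?_⟩
  conv_lhs => rw [← Nat.prod_factorization_pow_eq_self hn]
  rw [← Finsupp.prod_mul]
  refine Finsupp.prod_congr fun p _ => ?_
  obtain ⟨k, hk⟩ := h p
  rw [← pow_add, hk]
  congr 1
  omega

theorem Nat.exists_prime_odd_factorization_of_not_isSquare {n : ℕ} (hn : ¬IsSquare n) :
    ∃ p, p.Prime ∧ Odd (n.factorization p) := by
  have hn0 : n ≠ 0 := by rintro rfl; exact hn ⟨0, rfl⟩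
  by_contra! h
  refine hn (Nat.isSquare_of_forall_even_factorization hn0 fun p => ?_)
  by_cases hp : p.Prime
  · exact Nat.not_odd_iff_even.mp (h p hp)
  · simp [Nat.factorization_eq_zero_of_not_prime n hp]

theorem jacobiSym.eq_of_modEq_right {a b b' : ℕ} (hb : Odd b) (hb' : Odd b')
    (h : b ≡ b' [MOD 4 * a]) : J(a | b) = J(a | b') := by
  rw [mod_right' a hb, mod_right' a hb', show b % (4 * a) = b' % (4 * a) from h]

theorem jacobiSym.exists_mod_four_eq_one_eq_neg_one {p : ℕ} (hp : p.Prime) :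
    ∃ t : ℕ, t % 4 = 1 ∧ J(p | t) = -1 := by
  obtain rfl | hp2 := eq_or_ne p 2
  · exact ⟨5, rfl, by norm_num⟩
  have hodd := hp.odd_of_ne_two hp2
  have := Fact.mk hp
  obtain ⟨x, hx⟩ := FiniteField.exists_nonsquare (F := ZMod p) (by rwa [ZMod.ringChar_zmod_n])
  have hcop : Nat.Coprime 4 p := (Nat.coprime_two_left.mpr hodd).pow_left 2
  obtain ⟨t, ht4, htx⟩ := Nat.chineseRemainder hcop 1 x.val
  refine ⟨t, ht4, ?_⟩
  rw [quadratic_reciprocity_one_mod_four' hodd ht4, ZMod.nonsquare_iff_jacobiSym_eq_neg_one]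
  rwa [Int.cast_natCast, (ZMod.natCast_eq_natCast_iff _ _ _).mpr htx, ZMod.natCast_zmod_val]

/-- If `q` is not a perfect square, there is `r ≡ 1 mod 4` with Jacobi symbol `(q/r) = -1`. -/
theorem stmt_6 (q : ℕ) (hq : ¬ IsSquare q) :
    ∃ r : ℕ, r % 4 = 1 ∧ jacobiSym (q : ℤ) r = -1 := by
  have hq0 : q ≠ 0 := by rintro rfl; exact hq ⟨0, rfl⟩
  obtain ⟨p, hp, hodd⟩ := Nat.exists_prime_odd_factorization_of_not_isSquare hq
  obtain ⟨t, ht4, hpt⟩ := exists_mod_four_eq_one_eq_neg_one hp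
  set c := ordCompl[p] q
  have hcop : p.Coprime c := hp.coprime_iff_not_dvd.mpr (Nat.not_dvd_ordCompl hp hq0)
  have hcompat : t ≡ 1 [MOD Nat.gcd (4 * p) (4 * c)] := by
    rwa [Nat.gcd_mul_left, hcop.gcd_eq_one, mul_one]
  obtain ⟨r, hrt, hr1⟩ := Nat.chineseRemainder' hcompat
  have hr4 : r % 4 = 1 := (Nat.ModEq.of_mul_right p hrt).trans (show t ≡ 1 [MOD 4] from ht4)
  have hr : Odd r := Nat.odd_iff.mpr (by omega)
  have ht : Odd t := Nat.odd_iff.mpr (by omega)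
  refine ⟨r, hr4, ?_⟩
  have hq_eq : (q : ℤ) = (p : ℤ) ^ q.factorization p * (c : ℤ) := by
    exact_mod_cast (Nat.ordProj_mul_ordCompl_eq_self q p).symm
  rw [hq_eq, mul_left, pow_left, eq_of_modEq_right hr ht hrt, hpt,
    eq_of_modEq_right hr odd_one hr1, one_right, mul_one, hodd.neg_one_pow]
end

section
/- Let q ≡ 0 mod 4 with q not a perfect square. Then for each σ ∈ {1, -1, i, -i}, the number of p ∈ (ℤ/qℤ)^× with ε_p · (q/p) = σ equals φ(q)/4, where ε_p = 1 if p ≡ 1 mod 4 and ε_p = i if p ≡ 3 mod 4, (q/p) is the Jacobi symbol, and φ is Euler's totient function. -/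
/-!
Since `4 ∣ q`, the Jacobi symbol `(q/·)` is periodic modulo `q`, so `p ↦ (χ₄ p, (q/p))` is a
homomorphism `(ℤ/qℤ)ˣ → {±1}²`, of which `ε_p (q/p)` is an injective function. It is onto:
`-1 ↦ (-1, 1)`, and since `q` is not a square we can write `q = p^k m` with `p` prime, `k` odd
and `p ∤ m`; the Chinese remainder theorem gives `n` with `(p/n) = -1` and `(m/n) = 1`, hence
`(q/n) = -1`. So every fibre has `φ(q)/4` elements.
-/

open Complex

open scoped NumberTheorySymbols

open ZMod

theorem MonoidHom.card_mul_card_fiber_of_surjective {G H : Type*} [Group G] [Group H]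
    {f : G →* H} (hf : Function.Surjective f) (h : H) :
    Nat.card H * Nat.card (f ⁻¹' {h}) = Nat.card G := by
  rw [Nat.card_congr (f.fiberEquivKerOfSurjective hf h), ← f.ker.index_mul_card,
    Subgroup.index_ker, f.range_eq_top.2 hf, Subgroup.card_top]

theorem Nat.exists_prime_odd_factorization {a : ℕ} (ha : a ≠ 0) (hsq : ¬IsSquare a) :
    ∃ p, p.Prime ∧ Odd (a.factorization p) := by
  by_contra! h
  refine hsq ⟨a.factorization.prod fun p k => p ^ (k / 2), ?_⟩
  conv_lhs => rw [← Nat.prod_factorization_pow_eq_self ha]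
  rw [← Finsupp.prod_mul]
  refine Finsupp.prod_congr fun p hp => ?_
  have hev : Even (a.factorization p) :=
    Nat.not_odd_iff_even.1 (h p (Nat.prime_of_mem_primeFactors hp))
  rw [← pow_add, ← two_mul, Nat.mul_div_cancel' hev.two_dvd]

theorem jacobiSym_eq_one_of_modEq_one {m n : ℕ} (hn : n ≡ 1 [MOD 4 * m]) : J(m | n) = 1 := by
  have hodd : Odd n := Nat.odd_iff.2 (hn.of_mul_right m |>.of_dvd (by norm_num))
  rw [jacobiSym.mod_right' m hodd, hn, Nat.one_mod_eq_one.2 (by omega), jacobiSym.one_right]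

theorem exists_jacobiSym_two_eq_neg_one {m : ℕ} (hm : Odd m) :
    ∃ n : ℕ, J(2 | n) = -1 ∧ J(m | n) = 1 := by
  obtain ⟨n, hn8, hn1⟩ := Nat.chineseRemainder (Nat.Coprime.pow_left 3 hm.coprime_two_left) 5 1
  have hn8 : n % 8 = 5 := hn8
  have hodd : Odd n := Nat.odd_iff.2 (by omega)
  refine ⟨n, ?_, ?_⟩
  · rw [jacobiSym.at_two hodd, χ₈_nat_eq_if_mod_eight]
    simp [hn8, Nat.odd_iff.1 hodd]
  · rw [jacobiSym.quadratic_reciprocity_one_mod_four' hm (by omega),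
      jacobiSym.mod_left' (b := m) (a₂ := 1) (by exact_mod_cast hn1), jacobiSym.one_left]

theorem exists_jacobiSym_odd_prime_eq_neg_one {p m : ℕ} (hp : p.Prime) (hp2 : p ≠ 2)
    (hpm : p.Coprime m) : ∃ n : ℕ, J(p | n) = -1 ∧ J(m | n) = 1 := by
  have := Fact.mk hp
  obtain ⟨r, hr⟩ := FiniteField.exists_nonsquare (F := ZMod p) (by rwa [ringChar_zmod_n])
  have hp4 : p.Coprime 4 := (Nat.coprime_primes hp Nat.prime_two |>.2 hp2).pow_right 2
  obtain ⟨n, hnr, hn1⟩ := Nat.chineseRemainder (hp4.mul_right hpm) r.val 1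
  have hn4 : n % 4 = 1 := hn1.of_mul_right m
  refine ⟨n, ?_, jacobiSym_eq_one_of_modEq_one hn1⟩
  rw [jacobiSym.quadratic_reciprocity_one_mod_four' (hp.odd_of_ne_two hp2) hn4,
    ← jacobiSym.legendreSym.to_jacobiSym, legendreSym.eq_neg_one_iff, Int.cast_natCast,
    (ZMod.natCast_eq_natCast_iff _ _ _).2 hnr, natCast_val, cast_id]
  exact hr

theorem exists_jacobiSym_prime_eq_neg_one {p m : ℕ} (hp : p.Prime) (hpm : p.Coprime m) :
    ∃ n : ℕ, J(p | n) = -1 ∧ J(m | n) = 1 := by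
  obtain rfl | hp2 := eq_or_ne p 2
  · exact_mod_cast exists_jacobiSym_two_eq_neg_one (Nat.coprime_two_left.1 hpm)
  · exact exists_jacobiSym_odd_prime_eq_neg_one hp hp2 hpm

theorem exists_jacobiSym_eq_neg_one {a : ℕ} (ha : a ≠ 0) (hsq : ¬IsSquare a) :
    ∃ n : ℕ, J(a | n) = -1 := by
  obtain ⟨p, hp, hodd⟩ := Nat.exists_prime_odd_factorization ha hsq
  obtain ⟨n, hpn, hmn⟩ := exists_jacobiSym_prime_eq_neg_one hp (Nat.coprime_ordCompl hp ha)
  refine ⟨n, ?_⟩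
  rw [← Nat.ordProj_mul_ordCompl_eq_self a p, Nat.cast_mul, Nat.cast_pow, jacobiSym.mul_left,
    jacobiSym.pow_left, hpn, hmn, hodd.neg_one_pow, mul_one]

theorem jacobiSym_four_mul_left (a : ℤ) {b : ℕ} (hb : Odd b) : J(4 * a | b) = J(a | b) := by
  rw [jacobiSym.mul_left, show (4 : ℤ) = 2 ^ 2 by norm_num, jacobiSym.sq_one', one_mul]
  exact hb.coprime_two_left

/-- `jacobiSym.mod_right'` only gives period `4q`; for `q = 4k` it gives period `q` for `(k/·)`,
which agrees with `(q/·)` on odd numbers. -/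
theorem jacobiSym_emod_right_of_four_dvd {q n : ℕ} (hq : 4 ∣ q) (hn : Odd n) :
    J(q | n % q) = J(q | n) := by
  obtain ⟨k, rfl⟩ := hq
  have hn' : Odd (n % (4 * k)) := Nat.odd_iff.2 <| by
    rw [Nat.mod_mod_of_dvd _ (dvd_mul_of_dvd_left (by norm_num) k)]
    exact Nat.odd_iff.1 hn
  push_cast
  rw [jacobiSym_four_mul_left _ hn', jacobiSym_four_mul_left _ hn, jacobiSym.mod_right' k hn]

def signsToFourthRoot (c : ℤˣ × ℤˣ) : ℂ := (if c.1 = 1 then 1 else I) * ((c.2 : ℤ) : ℂ)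

theorem signsToFourthRoot_injective : Function.Injective signsToFourthRoot := by
  rintro ⟨a, b⟩ ⟨a', b'⟩ h
  rcases Int.units_eq_one_or a with rfl | rfl <;> rcases Int.units_eq_one_or b with rfl | rfl <;>
    rcases Int.units_eq_one_or a' with rfl | rfl <;>
    rcases Int.units_eq_one_or b' with rfl | rfl <;>
    simp [signsToFourthRoot, Complex.ext_iff] at h ⊢ <;> norm_num at h

theorem fourthRoots_subset_range_signsToFourthRoot :
    ({1, -1, I, -I} : Set ℂ) ⊆ Set.range signsToFourthRoot := by
  rintro σ (rfl | rfl | rfl | rfl)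
  exacts [⟨(1, 1), by simp [signsToFourthRoot]⟩, ⟨(1, -1), by simp [signsToFourthRoot]⟩,
    ⟨(-1, 1), by simp [signsToFourthRoot]⟩, ⟨(-1, -1), by simp [signsToFourthRoot]⟩]

namespace ZMod

variable {q : ℕ}

theorem odd_val_of_two_dvd (hq : 2 ∣ q) (u : (ZMod q)ˣ) : Odd (u : ZMod q).val :=
  Nat.coprime_two_right.1 ((val_coe_unit_coprime u).coprime_dvd_right hq)

theorem val_neg_one_of_ne_zero [NeZero q] : (-1 : ZMod q).val = q - 1 := by
  obtain ⟨Q, rfl⟩ : ∃ Q, q = Q + 1 := Nat.exists_eq_succ_of_ne_zero (NeZero.ne q)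
  exact val_neg_one Q

def jacobiSymHom (hq : 4 ∣ q) : (ZMod q)ˣ →* ℤˣ := MonoidHom.toHomUnits
  { toFun u := J(q | (u : ZMod q).val)
    map_one' := by
      rw [Units.val_one, val_one_eq_one_mod, jacobiSym_emod_right_of_four_dvd hq odd_one,
        jacobiSym.one_right]
    map_mul' u v := by
      have hu := odd_val_of_two_dvd (dvd_trans (by norm_num) hq) u
      have hv := odd_val_of_two_dvd (dvd_trans (by norm_num) hq) v
      have : NeZero (u : ZMod q).val := ⟨hu.pos.ne'⟩
      have : NeZero (v : ZMod q).val := ⟨hv.pos.ne'⟩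
      rw [Units.val_mul, val_mul, jacobiSym_emod_right_of_four_dvd hq (hu.mul hv),
        jacobiSym.mul_right] }

theorem coe_jacobiSymHom (hq : 4 ∣ q) (u : (ZMod q)ˣ) :
    (jacobiSymHom hq u : ℤ) = J(q | (u : ZMod q).val) := rfl

theorem jacobiSymHom_neg_one [NeZero q] (hq : 4 ∣ q) : jacobiSymHom hq (-1) = 1 := by
  have hq1 : 1 ≤ q := NeZero.one_le
  refine Units.ext ?_
  rw [coe_jacobiSymHom, Units.val_neg, Units.val_one, val_neg_one_of_ne_zero, Units.val_one,
    jacobiSym.mod_left' (a₂ := 1) ?_, jacobiSym.one_left]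
  exact (Int.modEq_iff_dvd.2 ⟨1, by push_cast [Nat.cast_sub hq1]; ring⟩).symm

theorem exists_jacobiSymHom_eq_neg_one [NeZero q] (hq : 4 ∣ q) (hsq : ¬IsSquare q) :
    ∃ u, jacobiSymHom hq u = -1 := by
  obtain ⟨n, hn⟩ := exists_jacobiSym_eq_neg_one (NeZero.ne q) hsq
  have : NeZero n := ⟨by rintro rfl; simp at hn⟩
  have hcop : n.Coprime q := by
    have h := mt jacobiSym.eq_zero_iff_not_coprime.2 (by rw [hn]; norm_num)
    rw [not_not, Int.gcd_natCast_natCast] at h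
    exact Nat.Coprime.symm h
  have hodd : Odd n :=
    Nat.coprime_two_right.1 (hcop.coprime_dvd_right (dvd_trans (by norm_num) hq))
  refine ⟨unitOfCoprime n hcop, Units.ext ?_⟩
  rw [coe_jacobiSymHom, coe_unitOfCoprime, val_natCast, jacobiSym_emod_right_of_four_dvd hq hodd,
    hn, Units.val_neg, Units.val_one]

theorem χ₄_unitsMap_eq_one_iff [NeZero q] (hq : 4 ∣ q) (u : (ZMod q)ˣ) :
    χ₄.toUnitHom (unitsMap hq u) = 1 ↔ (u : ZMod q).val % 4 = 1 := by
  have hu := Nat.odd_iff.1 (odd_val_of_two_dvd (dvd_trans (by norm_num) hq) u)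
  rw [Units.ext_iff, MulChar.coe_toUnitHom, unitsMap_val, cast_eq_val, χ₄_nat_eq_if_mod_four,
    if_neg (by omega)]
  split_ifs with h <;> simp [h]

theorem χ₄_unitsMap_neg_one [NeZero q] (hq : 4 ∣ q) :
    χ₄.toUnitHom (unitsMap hq (-1)) = -1 := by
  refine (Int.units_eq_one_or _).resolve_left fun h => ?_
  rw [χ₄_unitsMap_eq_one_iff, Units.val_neg, Units.val_one, val_neg_one_of_ne_zero] at h
  have := NeZero.ne q
  omega

def χ₄JacobiSymHom (hq : 4 ∣ q) : (ZMod q)ˣ →* ℤˣ × ℤˣ :=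
  (χ₄.toUnitHom.comp (unitsMap hq)).prod (jacobiSymHom hq)

theorem χ₄JacobiSymHom_neg_one [NeZero q] (hq : 4 ∣ q) : χ₄JacobiSymHom hq (-1) = (-1, 1) :=
  Prod.ext (χ₄_unitsMap_neg_one hq) (jacobiSymHom_neg_one hq)

theorem signsToFourthRoot_χ₄JacobiSymHom [NeZero q] (hq : 4 ∣ q) (u : (ZMod q)ˣ) :
    signsToFourthRoot (χ₄JacobiSymHom hq u) =
      (if (u : ZMod q).val % 4 = 1 then 1 else I) * (J(q | (u : ZMod q).val) : ℂ) := by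
  simp only [signsToFourthRoot, χ₄JacobiSymHom, MonoidHom.prod_apply, MonoidHom.comp_apply,
    χ₄_unitsMap_eq_one_iff, coe_jacobiSymHom]

theorem χ₄JacobiSymHom_surjective [NeZero q] (hq : 4 ∣ q) (hsq : ¬IsSquare q) :
    Function.Surjective (χ₄JacobiSymHom hq) := by
  set ψ := χ₄JacobiSymHom hq
  rintro ⟨a, b⟩
  obtain ⟨u, hu⟩ : ∃ u, (ψ u).2 = b := by
    obtain ⟨u, hu⟩ := exists_jacobiSymHom_eq_neg_one hq hsq
    rcases Int.units_eq_one_or b with rfl | rfl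
    exacts [⟨1, by simp⟩, ⟨u, hu⟩]
  by_cases ha : (ψ u).1 = a
  · exact ⟨u, Prod.ext ha hu⟩
  · refine ⟨-1 * u, ?_⟩
    rw [map_mul, χ₄JacobiSymHom_neg_one hq]
    ext1 <;> simp [Int.units_ne_iff_eq_neg.1 ha, hu]

end ZMod

/-- If `q ≡ 0 mod 4` is not a square, then for each fourth root of unity `σ`,
the number of units `p` mod `q` with `ε_p (q/p) = σ` is `φ(q)/4`. -/
theorem stmt_7 (q : ℕ) [NeZero q] (hq : q % 4 = 0) (hsq : ¬ IsSquare q)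
    (σ : ℂ) (hσ : σ ∈ ({1, -1, Complex.I, -Complex.I} : Set ℂ)) :
    4 * Nat.card {p : (ZMod q)ˣ //
        (if ((p : ZMod q).val % 4 = 1) then (1 : ℂ) else Complex.I) *
          (jacobiSym (q : ℤ) ((p : ZMod q).val) : ℂ) = σ}
      = Nat.totient q := by
  have hq4 : 4 ∣ q := Nat.dvd_of_mod_eq_zero hq
  obtain ⟨c, rfl⟩ := fourthRoots_subset_range_signsToFourthRoot hσ
  have hcard : Nat.card (ℤˣ × ℤˣ) = 4 := by simp [Nat.card_eq_fintype_card]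
  rw [← ZMod.card_units_eq_totient, ← Nat.card_eq_fintype_card,
    ← MonoidHom.card_mul_card_fiber_of_surjective (χ₄JacobiSymHom_surjective hq4 hsq) c, hcard]
  refine congrArg _ (Nat.card_congr (Equiv.subtypeEquivRight fun p => ?_))
  rw [← signsToFourthRoot_χ₄JacobiSymHom hq4, signsToFourthRoot_injective.eq_iff]
  rfl
end

section
/- Let q ≡ 0 mod 4 with gcd(p,q) = 1, and let φ : ℝ → ℂ be 1-periodic with absolutely convergent Fourier series ∑_k φ̂_k e^{2πikx} satisfying ∑_k k²|φ̂_k| < ∞. Then g_φ(p,q) = g_1(p,q) · G_φ^+(-p̄/q), where g_φ(p,q) = ∑_{h=0}^{q-1} φ(h/q) e^{2πi p h²/q}, G_φ^+(x) = ∑_{n∈ℤ} φ̂_{2n} e^{2πi n² x}, and p̄ is the inverse of p mod q. -/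
/-!
Expanding `φ` in its Fourier series and summing over `h` first, the `k`-th coefficient is
multiplied by the quadratic exponential sum `S(k) = ∑_{x mod q} e((p x² + k x)/q)`. For odd
`k` the shift `x ↦ x + q/2` multiplies every summand by `e(1/2) = -1` (this is where `4 ∣ q`
enters), so `S(k) = 0`. For `k = 2n`, completing the square with `p̄` gives
`S(2n) = e(-p̄ n²/q) S(0)`, and `S(0) = g₁(p,q)`.
-/

open Finset Complex Real

section QuadraticExpSum

variable {R M : Type*} [CommRing R] [Fintype R]

noncomputable def quadraticExpSum [CommSemiring M] (ψ : AddChar R M) (a b : R) : M :=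
  ∑ x, ψ (a * x ^ 2 + b * x)

/-- The shift `x ↦ x + s` multiplies every summand by `ψ s = -1`. -/
lemma quadraticExpSum_eq_zero [CommRing M] [NoZeroDivisors M] [CharZero M] (ψ : AddChar R M)
    {s : R} (hs : 2 * s = 0) (hss : s * s = 0) (hψs : ψ s = -1) (a : R) {b : R} (hb : b * s = s) :
    quadraticExpSum ψ a b = 0 := by
  have hshift : ∀ x, ψ (a * (x + s) ^ 2 + b * (x + s)) = -ψ (a * x ^ 2 + b * x) := fun x => by
    rw [show a * (x + s) ^ 2 + b * (x + s) = a * x ^ 2 + b * x + s by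
        linear_combination (a * x) * hs + a * hss + hb,
      AddChar.map_add_eq_mul, hψs, mul_neg_one]
  refine self_eq_neg.mp ?_
  calc quadraticExpSum ψ a b = ∑ x, ψ (a * (x + s) ^ 2 + b * (x + s)) :=
        (Fintype.sum_equiv (Equiv.addRight s) _ _ fun _ => rfl).symm
    _ = -quadraticExpSum ψ a b := by simp only [hshift, sum_neg_distrib, quadraticExpSum]

lemma quadraticExpSum_two_mul [CommSemiring M] (ψ : AddChar R M) {a a' : R} (ha : a * a' = 1)
    (n : R) : quadraticExpSum ψ a (2 * n) = ψ (-(a' * n ^ 2)) * quadraticExpSum ψ a 0 := by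
  have hsq : ∀ x, a * x ^ 2 + 2 * n * x
      = -(a' * n ^ 2) + (a * (x + a' * n) ^ 2 + 0 * (x + a' * n)) := fun x => by
    linear_combination (-(2 * n * x) - a' * n ^ 2) * ha
  simp only [quadraticExpSum, hsq, AddChar.map_add_eq_mul, ← mul_sum]
  exact congrArg _ (Fintype.sum_equiv (Equiv.addRight (a' * n)) _ _ fun _ => rfl)

end QuadraticExpSum

section ZMod

variable {N : ℕ} [NeZero N]

lemma sum_range_natCast_zmod {M : Type*} [AddCommMonoid M] (f : ZMod N → M) :
    ∑ h ∈ range N, f h = ∑ x, f x :=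
  sum_nbij' (fun h => (h : ZMod N)) ZMod.val (by simp) (fun x _ => by simpa using ZMod.val_lt x)
    (fun h hh => ZMod.val_cast_of_lt (mem_range.mp hh)) (fun x _ => ZMod.natCast_zmod_val x)
    fun _ _ => rfl

lemma ZMod.stdAddChar_half {m : ℕ} (hm : 2 * m = N) : ZMod.stdAddChar (m : ZMod N) = -1 := by
  have hm0 : (m : ℂ) ≠ 0 := by
    have := NeZero.ne N
    exact_mod_cast (by omega : m ≠ 0)
  rw [← Int.cast_natCast, ZMod.stdAddChar_coe, ← hm]
  convert Complex.exp_pi_mul_I using 2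
  push_cast
  field_simp

lemma quadraticExpSum_stdAddChar_odd (h4 : 4 ∣ N) (a : ZMod N) {k : ℤ} (hk : Odd k) :
    quadraticExpSum ZMod.stdAddChar a (k : ZMod N) = 0 := by
  obtain ⟨r, rfl⟩ := h4
  obtain ⟨j, rfl⟩ := hk
  set s : ZMod (4 * r) := ((2 * r : ℕ) : ZMod (4 * r)) with hs_def
  have h0 : ((4 * r : ℕ) : ZMod (4 * r)) = 0 := ZMod.natCast_self _
  have hs : 2 * s = 0 := by rw [← h0, hs_def]; push_cast; ring
  refine quadraticExpSum_eq_zero _ hs ?_ (ZMod.stdAddChar_half (by ring)) a ?_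
  · rw [show s * s = ((4 * r : ℕ) : ZMod (4 * r)) * r by rw [hs_def]; push_cast; ring, h0,
      zero_mul]
  · push_cast
    linear_combination (j : ZMod (4 * r)) * hs

lemma ZMod.stdAddChar_quadratic (p k : ℤ) (h : ℕ) :
    ZMod.stdAddChar ((p : ZMod N) * (h : ZMod N) ^ 2 + (k : ZMod N) * (h : ZMod N))
      = cexp (2 * π * I * k * ((h / N : ℝ) : ℂ)) *
        cexp (2 * π * I * p * (h : ℂ) ^ 2 / N) := by
  have hN : (N : ℂ) ≠ 0 := NeZero.ne _
  rw [← Complex.exp_add, show (p : ZMod N) * (h : ZMod N) ^ 2 + (k : ZMod N) * (h : ZMod N)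
      = ((p * (h : ℤ) ^ 2 + k * h : ℤ) : ZMod N) by push_cast; ring, ZMod.stdAddChar_coe]
  congr 1
  push_cast
  field_simp
  ring

lemma sum_range_cexp_eq_quadraticExpSum (p : ℤ) :
    ∑ h ∈ range N, cexp (2 * π * I * p * (h : ℂ) ^ 2 / N)
      = quadraticExpSum ZMod.stdAddChar (p : ZMod N) 0 := by
  rw [quadraticExpSum, ← sum_range_natCast_zmod]
  refine sum_congr rfl fun h _ => ?_
  simpa using (ZMod.stdAddChar_quadratic (N := N) p 0 h).symm

lemma ZMod.stdAddChar_neg_mul_sq (b n : ℤ) :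
    ZMod.stdAddChar (-((b : ZMod N) * (n : ZMod N) ^ 2))
      = cexp (2 * π * I * (n : ℂ) ^ 2 * (-(b : ℂ) / N)) := by
  rw [show -((b : ZMod N) * (n : ZMod N) ^ 2) = ((-(b * n ^ 2) : ℤ) : ZMod N) by push_cast; ring,
    ZMod.stdAddChar_coe]
  congr 1
  push_cast
  ring

end ZMod

lemma hasSum_mul_quadraticExpSum {q : ℕ} [NeZero q] (p : ℤ) {φ : ℝ → ℂ} {c : ℤ → ℂ}
    (hφ : ∀ x : ℝ, HasSum (fun k : ℤ => c k * cexp (2 * π * I * k * x)) (φ x)) :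
    HasSum (fun k : ℤ => c k * quadraticExpSum ZMod.stdAddChar (p : ZMod q) k)
      (∑ h ∈ range q, φ ((h : ℝ) / q) * cexp (2 * π * I * p * (h : ℂ) ^ 2 / q)) := by
  have hterm : ∀ h ∈ range q, HasSum
      (fun k : ℤ => c k *
        ZMod.stdAddChar ((p : ZMod q) * (h : ZMod q) ^ 2 + (k : ZMod q) * (h : ZMod q)))
      (φ ((h : ℝ) / q) * cexp (2 * π * I * p * (h : ℂ) ^ 2 / q)) := fun h _ => by
    refine ((hφ (h / q)).mul_right (cexp (2 * π * I * p * (h : ℂ) ^ 2 / q))).congr_fun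
      fun k => ?_
    rw [ZMod.stdAddChar_quadratic, ← mul_assoc]
  convert hasSum_sum hterm using 2 with k
  rw [← mul_sum, quadraticExpSum, sum_range_natCast_zmod
    fun x : ZMod q => ZMod.stdAddChar ((p : ZMod q) * x ^ 2 + (k : ZMod q) * x)]

theorem stmt_13_general (q : ℕ) (hq0 : 0 < q) (hq : q % 4 = 0) (p : ℤ)
    (pbar : ℤ) (hpbar : p * pbar ≡ 1 [ZMOD (q : ℤ)])
    (φ : ℝ → ℂ) (c : ℤ → ℂ)
    (hφ : ∀ x : ℝ, HasSum (fun k : ℤ => c k * Complex.exp (2 * Real.pi * Complex.I * (k : ℂ) * (x : ℂ))) (φ x)) :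
    ∑ h ∈ Finset.range q, φ ((h : ℝ) / q) *
        Complex.exp (2 * Real.pi * Complex.I * (p : ℂ) * (h : ℂ) ^ 2 / q)
      = (∑ h ∈ Finset.range q,
          Complex.exp (2 * Real.pi * Complex.I * (p : ℂ) * (h : ℂ) ^ 2 / q)) *
        ∑' n : ℤ, c (2 * n) *
          Complex.exp (2 * Real.pi * Complex.I * (n : ℂ) ^ 2 * (-(pbar : ℂ) / q)) := by
  have : NeZero q := ⟨hq0.ne'⟩
  have hinv : (p : ZMod q) * pbar = 1 := by
    exact_mod_cast (ZMod.intCast_eq_intCast_iff _ _ q).mpr hpbar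
  have hodd : ∀ k ∉ Set.range fun n : ℤ => 2 * n,
      c k * quadraticExpSum ZMod.stdAddChar (p : ZMod q) k = 0 := fun k hk => by
    have : Odd k := Int.not_even_iff_odd.mp fun ⟨n, hn⟩ => hk ⟨n, show 2 * n = k by omega⟩
    rw [quadraticExpSum_stdAddChar_odd (Nat.dvd_of_mod_eq_zero hq) _ this, mul_zero]
  rw [← (hasSum_mul_quadraticExpSum p hφ).tsum_eq,
    ← (mul_right_injective₀ two_ne_zero).tsum_eq (Function.support_subset_iff'.mpr hodd),
    sum_range_cexp_eq_quadraticExpSum, ← tsum_mul_left]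
  refine tsum_congr fun n => ?_
  simp only [Int.cast_mul, Int.cast_ofNat, quadraticExpSum_two_mul _ hinv,
    ZMod.stdAddChar_neg_mul_sq]
  ring

/-- Functional equation for `q ≡ 0 mod 4`: `g_φ(p,q) = g₁(p,q) · G_φ⁺(-p̄/q)`. -/
theorem stmt_13 (q : ℕ) (hq0 : 0 < q) (hq : q % 4 = 0) (p : ℤ)
    (hp : Int.gcd p (q : ℤ) = 1)
    (pbar : ℤ) (hpbar : p * pbar ≡ 1 [ZMOD (q : ℤ)])
    (φ : ℝ → ℂ) (c : ℤ → ℂ)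
    (hc : Summable fun k : ℤ => (k : ℝ) ^ 2 * ‖c k‖)
    (hφ : ∀ x : ℝ, HasSum (fun k : ℤ => c k * Complex.exp (2 * Real.pi * Complex.I * (k : ℂ) * (x : ℂ))) (φ x)) :
    ∑ h ∈ Finset.range q, φ ((h : ℝ) / q) *
        Complex.exp (2 * Real.pi * Complex.I * (p : ℂ) * (h : ℂ) ^ 2 / q)
      = (∑ h ∈ Finset.range q,
          Complex.exp (2 * Real.pi * Complex.I * (p : ℂ) * (h : ℂ) ^ 2 / q)) *
        ∑' n : ℤ, c (2 * n) *
          Complex.exp (2 * Real.pi * Complex.I * (n : ℂ) ^ 2 * (-(pbar : ℂ) / q)) :=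
  stmt_13_general q hq0 hq p pbar hpbar φ c hφ
end

section
/- Let q be odd with gcd(p,q) = 1, and φ : ℝ → ℂ be 1-periodic with Fourier coefficients φ̂_k satisfying ∑_k k²|φ̂_k| < ∞. Then g_φ(p,q) = g_1(p,q) · G_φ(-\overline{4p}/q), where G_φ(x) = ∑_{n∈ℤ} φ̂_n e^{2πi n² x} and \overline{4p} is the inverse of 4p mod q. -/
open Finset Complex Real

/-!
Expanding `φ` in its Fourier series and exchanging the finite sum over `h` with the series
reduces the claim to the twisted Gauss sums `∑_h e((k h + p h²)/q)`. Since `4p` is invertible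
mod `q`, completing the square turns each of them into `e(-w k²/q) · g₁(p,q)`.
-/

/-- Substituting `x ↦ x + 2wb`, where `w` inverts `4a`, completes the square. -/
theorem AddChar.sum_apply_mul_add_mul_sq {R M : Type*} [CommRing R] [Fintype R] [Semiring M]
    (ψ : AddChar R M) {a w : R} (haw : 4 * a * w = 1) (b : R) :
    ∑ x, ψ (b * x + a * x ^ 2) = ψ (-(w * b ^ 2)) * ∑ x, ψ (a * x ^ 2) := by
  rw [mul_sum]
  refine Fintype.sum_equiv (Equiv.addRight (2 * w * b)) _ _ fun x => ?_
  rw [← AddChar.map_add_eq_mul, Equiv.coe_addRight]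
  congr 1
  linear_combination (-(b * x + w * b ^ 2)) * haw

theorem ZMod.sum_range_natCast {M : Type*} [AddCommMonoid M] (q : ℕ) [NeZero q]
    (f : ZMod q → M) : ∑ h ∈ range q, f h = ∑ a : ZMod q, f a := by
  exact sum_nbij' (fun h => h) ZMod.val (fun h _ => mem_univ _)
    (fun a _ => mem_range.2 a.val_lt) (fun h hh => ZMod.val_cast_of_lt (mem_range.1 hh))
    (fun a _ => ZMod.natCast_zmod_val a) (fun _ _ => rfl)

theorem sum_range_exp_mul_exp_quadratic (q : ℕ) [NeZero q] {p w : ℤ}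
    (hw : 4 * p * w ≡ 1 [ZMOD (q : ℤ)]) (k : ℤ) :
    ∑ h ∈ range q,
        cexp (2 * π * I * k * ((h / q : ℝ) : ℂ)) * cexp (2 * π * I * p * h ^ 2 / q)
      = cexp (2 * π * I * k ^ 2 * (-(w : ℂ) / q)) *
          ∑ h ∈ range q, cexp (2 * π * I * p * h ^ 2 / q) := by
  have he (x : ℤ) {z : ℂ} (hz : z = 2 * π * I * x / q) :
      cexp z = ZMod.stdAddChar (x : ZMod q) :=
    hz ▸ (ZMod.stdAddChar_coe x).symm
  have hw' : 4 * (p : ZMod q) * w = 1 := by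
    exact_mod_cast (ZMod.intCast_eq_intCast_iff _ _ q).2 hw
  have hlin (h : ℕ) :
      cexp (2 * π * I * k * ((h / q : ℝ) : ℂ)) * cexp (2 * π * I * p * h ^ 2 / q)
      = ZMod.stdAddChar ((k : ZMod q) * (h : ZMod q) + (p : ZMod q) * (h : ZMod q) ^ 2) := by
    rw [← Complex.exp_add, he (k * h + p * h ^ 2) (by push_cast; field_simp)]
    push_cast; rfl
  have hquad (h : ℕ) : cexp (2 * π * I * p * h ^ 2 / q)
      = ZMod.stdAddChar ((p : ZMod q) * (h : ZMod q) ^ 2) := by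
    rw [he (p * h ^ 2) (by push_cast; ring)]
    push_cast; rfl
  have hsq : cexp (2 * π * I * k ^ 2 * (-(w : ℂ) / q))
      = ZMod.stdAddChar (-((w : ZMod q) * (k : ZMod q) ^ 2)) := by
    rw [he (-(w * k ^ 2)) (by push_cast; ring)]
    push_cast; rfl
  rw [sum_congr rfl fun h _ => hlin h, hsq]
  simp only [hquad]
  rw [ZMod.sum_range_natCast q fun x => ZMod.stdAddChar ((k : ZMod q) * x + (p : ZMod q) * x ^ 2),
    ZMod.sum_range_natCast q fun x => ZMod.stdAddChar ((p : ZMod q) * x ^ 2)]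
  exact AddChar.sum_apply_mul_add_mul_sq _ hw' _

theorem stmt_14_general (q : ℕ) (hq0 : 0 < q) (p : ℤ)
    (w : ℤ) (hw : 4 * p * w ≡ 1 [ZMOD (q : ℤ)])
    (φ : ℝ → ℂ) (c : ℤ → ℂ)
    (hφ : ∀ x : ℝ, HasSum (fun k : ℤ => c k * Complex.exp (2 * Real.pi * Complex.I * (k : ℂ) * (x : ℂ))) (φ x)) :
    ∑ h ∈ Finset.range q, φ ((h : ℝ) / q) *
        Complex.exp (2 * Real.pi * Complex.I * (p : ℂ) * (h : ℂ) ^ 2 / q)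
      = (∑ h ∈ Finset.range q,
          Complex.exp (2 * Real.pi * Complex.I * (p : ℂ) * (h : ℂ) ^ 2 / q)) *
        ∑' n : ℤ, c n *
          Complex.exp (2 * Real.pi * Complex.I * (n : ℂ) ^ 2 * (-(w : ℂ) / q)) := by
  have : NeZero q := ⟨hq0.ne'⟩
  have hterm (h : ℕ) := (hφ (h / q)).mul_right (cexp (2 * π * I * p * h ^ 2 / q))
  calc _ = ∑' k : ℤ, ∑ h ∈ range q, c k * cexp (2 * π * I * k * ((h / q : ℝ) : ℂ)) *
          cexp (2 * π * I * p * h ^ 2 / q) := by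
        rw [Summable.tsum_finsetSum fun h _ => (hterm h).summable]
        exact sum_congr rfl fun h _ => (hterm h).tsum_eq.symm
    _ = ∑' k : ℤ, c k * (cexp (2 * π * I * k ^ 2 * (-(w : ℂ) / q)) *
          ∑ h ∈ range q, cexp (2 * π * I * p * h ^ 2 / q)) := by
        refine tsum_congr fun k => ?_
        rw [← sum_range_exp_mul_exp_quadratic q hw, mul_sum]
        simp only [mul_assoc]
    _ = _ := by
        simp only [← mul_assoc, tsum_mul_right]
        exact mul_comm _ _

/-- Functional equation for odd `q`: `g_φ(p,q) = g₁(p,q) · G_φ(-(4p)⁻¹/q)`. -/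
theorem stmt_14 (q : ℕ) (hq0 : 0 < q) (hq : Odd q) (p : ℤ)
    (hp : Int.gcd p (q : ℤ) = 1)
    (w : ℤ) (hw : 4 * p * w ≡ 1 [ZMOD (q : ℤ)])
    (φ : ℝ → ℂ) (c : ℤ → ℂ)
    (hc : Summable fun k : ℤ => (k : ℝ) ^ 2 * ‖c k‖)
    (hφ : ∀ x : ℝ, HasSum (fun k : ℤ => c k * Complex.exp (2 * Real.pi * Complex.I * (k : ℂ) * (x : ℂ))) (φ x)) :
    ∑ h ∈ Finset.range q, φ ((h : ℝ) / q) *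
        Complex.exp (2 * Real.pi * Complex.I * (p : ℂ) * (h : ℂ) ^ 2 / q)
      = (∑ h ∈ Finset.range q,
          Complex.exp (2 * Real.pi * Complex.I * (p : ℂ) * (h : ℂ) ^ 2 / q)) *
        ∑' n : ℤ, c n *
          Complex.exp (2 * Real.pi * Complex.I * (n : ℂ) ^ 2 * (-(w : ℂ) / q)) :=
  stmt_14_general q hq0 p w hw φ c hφ
end
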